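/- Let Δ > 1 be real and let n, D, m be naturals with Δ² < D ≤ n/2. If M ∈ F₂^{m×n} satisfies the Δ-approximation condition for bound D, then m ≥ (D/Δ² − 1)·log₂(n/(D − Δ²)) − (D/Δ² − 1)·log₂ e. -/
import Mathlib


/-- The group testing output: `(M ⊙ x) i = 1` iff some coordinate `j` tested by row `i`
(`M i j = 1`) is defective (`x j = 1`). -/
def orMul {m n : ℕ} (M : Matrix (Fin m) (Fin n) (ZMod 2)) (x : Fin n → ZMod 2) :
    Fin m → ZMod 2 :=
  fun i => if ∃ j, M i j = 1 ∧ x j = 1 then 1 else 0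

/-- The indicator vector `v(S) ∈ F₂ⁿ` of a subset `S ⊆ [n]`. -/
def indic {n : ℕ} (S : Finset (Fin n)) : Fin n → ZMod 2 :=
  fun j => if j ∈ S then 1 else 0

/-- `M` satisfies the `Δ`-approximation condition for bound `D`. -/
def ApproxCond {m n : ℕ} (M : Matrix (Fin m) (Fin n) (ZMod 2)) (Δ : ℝ) (D : ℕ) : Prop :=
  ∀ S₁ S₂ : Finset (Fin n), 1 ≤ S₂.card → S₂.card ≤ S₁.card → S₁.card ≤ D →
    (S₁.card : ℝ) > Δ ^ 2 * (S₂.card : ℝ) →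
    orMul M (indic S₁) ≠ orMul M (indic S₂)

lemma indic_eq_one_iff {n : ℕ} {S : Finset (Fin n)} {j : Fin n} : indic S j = 1 ↔ j ∈ S := by
  unfold indic
  split <;> simp_all <;> decide

lemma orMul_indic_apply {m n : ℕ} (M : Matrix (Fin m) (Fin n) (ZMod 2)) (S : Finset (Fin n))
    (i : Fin m) :
    orMul M (indic S) i = if ∃ j, M i j = 1 ∧ j ∈ S then 1 else 0 := by
  simp only [orMul, indic_eq_one_iff]

lemma orMul_union {m n : ℕ} (M : Matrix (Fin m) (Fin n) (ZMod 2)) {A B : Finset (Fin n)}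
    {y : Fin m → ZMod 2} (hA : orMul M (indic A) = y) (hB : orMul M (indic B) = y) :
    orMul M (indic (A ∪ B)) = y := by
  funext i
  have hA' := congrFun hA i
  have hB' := congrFun hB i
  rw [orMul_indic_apply] at hA' hB' ⊢
  by_cases hpA : ∃ j, M i j = 1 ∧ j ∈ A
  · rw [if_pos hpA] at hA'
    rw [if_pos]
    · exact hA'
    · obtain ⟨j, hj1, hj2⟩ := hpA
      exact ⟨j, hj1, Finset.mem_union_left _ hj2⟩
  · by_cases hpB : ∃ j, M i j = 1 ∧ j ∈ B
    · rw [if_pos hpB] at hB'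
      rw [if_pos]
      · exact hB'
      · obtain ⟨j, hj1, hj2⟩ := hpB
        exact ⟨j, hj1, Finset.mem_union_right _ hj2⟩
    · rw [if_neg hpA] at hA'
      rw [if_neg]
      · exact hA'
      · rintro ⟨j, hj1, hj2⟩
        rcases Finset.mem_union.mp hj2 with h | h
        · exact hpA ⟨j, hj1, h⟩
        · exact hpB ⟨j, hj1, h⟩

lemma orMul_sandwich {m n : ℕ} (M : Matrix (Fin m) (Fin n) (ZMod 2)) {S W V : Finset (Fin n)}
    (hSW : S ⊆ W) (hWV : W ⊆ V)
    (h : orMul M (indic V) = orMul M (indic S)) :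
    orMul M (indic W) = orMul M (indic S) := by
  funext i
  have h' := congrFun h i
  simp only [orMul_indic_apply] at h' ⊢
  by_cases hS : ∃ j, M i j = 1 ∧ j ∈ S
  · rw [if_pos hS]
    rw [if_pos]
    obtain ⟨j, hj1, hj2⟩ := hS
    exact ⟨j, hj1, hSW hj2⟩
  · rw [if_neg hS]
    rw [if_neg hS] at h'
    rw [if_neg]
    rintro ⟨j, hj1, hj2⟩
    rw [if_pos ⟨j, hj1, hWV hj2⟩] at h'
    exact one_ne_zero h'

lemma card_le_of_subset_output {m n D k : ℕ} {M : Matrix (Fin m) (Fin n) (ZMod 2)} {Δ : ℝ}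
    (hM : ApproxCond M Δ D) (hΔ : 1 < Δ) (hk : 1 ≤ k) (hkD : Δ ^ 2 * k < D)
    {S V : Finset (Fin n)} (hS : S.card = k) (hSV : S ⊆ V)
    (hVy : orMul M (indic V) = orMul M (indic S)) :
    (V.card : ℝ) ≤ Δ ^ 2 * k := by
  by_contra hcon
  push_neg at hcon
  have hΔ2 : (1:ℝ) ≤ Δ ^ 2 := by nlinarith
  have hΔk_pos : (0:ℝ) ≤ Δ ^ 2 * k := by positivity
  set B : ℕ := ⌊Δ ^ 2 * k⌋₊ with hB
  have hBle : (B : ℝ) ≤ Δ ^ 2 * k := Nat.floor_le hΔk_pos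
  have hkB : k ≤ B := by
    apply Nat.le_floor
    calc (k:ℝ) = 1 * k := (one_mul _).symm
    _ ≤ Δ ^ 2 * k := by
      apply mul_le_mul_of_nonneg_right hΔ2 (by positivity)
  have hBD : B < D := by
    exact_mod_cast lt_of_le_of_lt hBle hkD
  have hcV : B + 1 ≤ V.card := by
    have : (B : ℝ) < V.card := lt_of_le_of_lt hBle hcon
    exact_mod_cast this
  have hSc : S.card ≤ B + 1 := by omega
  obtain ⟨W, hSW, hWV, hWc⟩ := Finset.exists_subsuperset_card_eq hSV hSc hcV
  have hWy : orMul M (indic W) = orMul M (indic S) := orMul_sandwich M hSW hWV hVy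
  apply hM W S (by omega) (by omega) (by omega) _ hWy
  rw [hWc, hS]
  push_cast
  exact lt_of_lt_of_le (Nat.lt_floor_add_one _) (by push_cast; linarith)

lemma sup_output_card {m n D k : ℕ} {M : Matrix (Fin m) (Fin n) (ZMod 2)} {Δ : ℝ}
    (hM : ApproxCond M Δ D) (hΔ : 1 < Δ) (hk : 1 ≤ k) (hkD : Δ ^ 2 * k < D)
    (y : Fin m → ZMod 2) (𝒜 : Finset (Finset (Fin n))) (h𝒜 : 𝒜.Nonempty)
    (hall : ∀ S ∈ 𝒜, S.card = k ∧ orMul M (indic S) = y) :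
    orMul M (indic (𝒜.sup id)) = y ∧ ((𝒜.sup id).card : ℝ) ≤ Δ ^ 2 * k := by
  induction h𝒜 using Finset.Nonempty.cons_induction with
  | singleton S =>
    have h := hall S (Finset.mem_singleton_self S)
    rw [Finset.sup_singleton]
    simp only [id]
    refine ⟨h.2, ?_⟩
    rw [← h.2] at *
    exact card_le_of_subset_output hM hΔ hk hkD h.1 (Finset.Subset.refl S) rfl
  | cons S 𝒜 hS h𝒜 ih =>
    have hall' : ∀ T ∈ 𝒜, T.card = k ∧ orMul M (indic T) = y := fun T hT =>
      hall T (Finset.mem_cons_of_mem hT)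
    obtain ⟨ihy, ihc⟩ := ih hall'
    have hSmem := hall S (Finset.mem_cons_self S 𝒜)
    rw [Finset.sup_cons]
    have hsup : (id S ⊔ 𝒜.sup id) = S ∪ 𝒜.sup id := rfl
    rw [hsup]
    have hy : orMul M (indic (S ∪ 𝒜.sup id)) = y := orMul_union M hSmem.2 ihy
    refine ⟨hy, ?_⟩
    have : orMul M (indic (S ∪ 𝒜.sup id)) = orMul M (indic S) := by rw [hy, hSmem.2]
    exact card_le_of_subset_output hM hΔ hk hkD hSmem.1 Finset.subset_union_left this

lemma count_key {m n D k : ℕ} {M : Matrix (Fin m) (Fin n) (ZMod 2)} {Δ : ℝ}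
    (hM : ApproxCond M Δ D) (hΔ : 1 < Δ) (hk : 1 ≤ k) (hkD : Δ ^ 2 * k < D) :
    n.choose k ≤ 2 ^ m * (⌊Δ ^ 2 * k⌋₊).choose k := by
  classical
  set B : ℕ := ⌊Δ ^ 2 * k⌋₊ with hB
  set F : Finset (Finset (Fin n)) := Finset.powersetCard k (Finset.univ : Finset (Fin n)) with hF
  have hFcard : F.card = n.choose k := by
    rw [hF, Finset.card_powersetCard, Finset.card_univ, Fintype.card_fin]
  set f : Finset (Fin n) → (Fin m → ZMod 2) := fun S => orMul M (indic S) with hf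
  have key : ∀ y ∈ F.image f, (F.filter (fun S => f S = y)).card ≤ B.choose k := by
    intro y hy
    obtain ⟨S₀, hS₀F, hS₀y⟩ := Finset.mem_image.mp hy
    set G := F.filter (fun S => f S = y) with hG
    have hGne : G.Nonempty := ⟨S₀, Finset.mem_filter.mpr ⟨hS₀F, hS₀y⟩⟩
    have hall : ∀ S ∈ G, S.card = k ∧ orMul M (indic S) = y := by
      intro S hS
      rw [hG, Finset.mem_filter, hF, Finset.mem_powersetCard] at hS
      exact ⟨hS.1.2, hS.2⟩
    obtain ⟨hUy, hUcard⟩ := sup_output_card hM hΔ hk hkD y G hGne hall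
    set U := G.sup id with hU
    have hUB : U.card ≤ B := Nat.le_floor hUcard
    have hsub : G ⊆ U.powersetCard k := by
      intro S hS
      rw [Finset.mem_powersetCard]
      exact ⟨Finset.le_sup (f := id) hS, (hall S hS).1⟩
    calc G.card ≤ (U.powersetCard k).card := Finset.card_le_card hsub
      _ = U.card.choose k := Finset.card_powersetCard k U
      _ ≤ B.choose k := Nat.choose_le_choose k hUB
  have h1 : F.card ≤ B.choose k * (F.image f).card :=
    Finset.card_le_mul_card_image F (B.choose k) key
  have h2 : (F.image f).card ≤ 2 ^ m := by
    calc (F.image f).card ≤ Fintype.card (Fin m → ZMod 2) := Finset.card_le_univ _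
      _ = 2 ^ m := by simp [Fintype.card_fun]
  calc n.choose k = F.card := hFcard.symm
    _ ≤ B.choose k * (F.image f).card := h1
    _ ≤ B.choose k * 2 ^ m := Nat.mul_le_mul_left _ h2
    _ = 2 ^ m * B.choose k := Nat.mul_comm _ _

lemma descFactorial_pow_le {k B n : ℕ} (hkB : k ≤ B) (hBn : B ≤ n) :
    B.descFactorial k * n ^ k ≤ n.descFactorial k * B ^ k := by
  induction k with
  | zero => simp
  | succ j ih =>
    have hjB : j ≤ B := by omega
    have ih' := ih (by omega)
    rw [Nat.descFactorial_succ, Nat.descFactorial_succ, pow_succ, pow_succ]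
    have h1 : (B - j) * n ≤ (n - j) * B := by
      rw [Nat.sub_mul, Nat.sub_mul]
      have hh1 : j * B ≤ j * n := Nat.mul_le_mul_left j hBn
      have hh2 : B * n = n * B := Nat.mul_comm B n
      have hh3 : j * n ≤ B * n := Nat.mul_le_mul_right n hjB
      omega
    calc (B - j) * B.descFactorial j * (n ^ j * n)
        = ((B - j) * n) * (B.descFactorial j * n ^ j) := by ring
      _ ≤ ((n - j) * B) * (n.descFactorial j * B ^ j) := Nat.mul_le_mul h1 ih'
      _ = (n - j) * n.descFactorial j * (B ^ j * B) := by ring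

lemma choose_pow_le {k B n : ℕ} (hkB : k ≤ B) (hBn : B ≤ n) :
    B.choose k * n ^ k ≤ n.choose k * B ^ k := by
  have h := descFactorial_pow_le hkB hBn
  rw [Nat.descFactorial_eq_factorial_mul_choose, Nat.descFactorial_eq_factorial_mul_choose] at h
  have hfac : 0 < Nat.factorial k := Nat.factorial_pos k
  apply Nat.le_of_mul_le_mul_left _ hfac
  calc Nat.factorial k * (B.choose k * n ^ k)
      = Nat.factorial k * B.choose k * n ^ k := by ring
    _ ≤ Nat.factorial k * n.choose k * B ^ k := h
    _ = Nat.factorial k * (n.choose k * B ^ k) := by ring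

lemma pow_le_key {m n D k : ℕ} {M : Matrix (Fin m) (Fin n) (ZMod 2)} {Δ : ℝ}
    (hM : ApproxCond M Δ D) (hΔ : 1 < Δ) (hk : 1 ≤ k) (hkD : Δ ^ 2 * k < D) (hDn : D ≤ n) :
    n ^ k ≤ 2 ^ m * (⌊Δ ^ 2 * k⌋₊) ^ k := by
  set B : ℕ := ⌊Δ ^ 2 * k⌋₊ with hB
  have hΔ2 : (1:ℝ) ≤ Δ ^ 2 := by nlinarith
  have hkB : k ≤ B := by
    apply Nat.le_floor
    calc (k:ℝ) = 1 * k := (one_mul _).symm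
    _ ≤ Δ ^ 2 * k := mul_le_mul_of_nonneg_right hΔ2 (by positivity)
  have hBD : B < D := by
    have : (B : ℝ) < D := lt_of_le_of_lt (Nat.floor_le (by positivity)) hkD
    exact_mod_cast this
  have hBn : B ≤ n := by omega
  have hchoosepos : 0 < B.choose k := Nat.choose_pos hkB
  have h1 : B.choose k * n ^ k ≤ n.choose k * B ^ k := choose_pow_le hkB hBn
  have h2 : n.choose k ≤ 2 ^ m * B.choose k := count_key hM hΔ hk hkD
  apply Nat.le_of_mul_le_mul_left _ hchoosepos
  calc B.choose k * n ^ k ≤ n.choose k * B ^ k := h1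
    _ ≤ (2 ^ m * B.choose k) * B ^ k := Nat.mul_le_mul_right _ h2
    _ = B.choose k * (2 ^ m * B ^ k) := by ring

lemma small_aux {t : ℝ} (ht : 0 < t) : t * (-Real.log t - 1) ≤ Real.exp (-2) := by
  have hspos : 0 < Real.exp 2 * t := by positivity
  have hlog : Real.log (Real.exp 2 * t) = 2 + Real.log t := by
    rw [Real.log_mul (by positivity) ht.ne', Real.log_exp]
  have h1 : -Real.log (Real.exp 2 * t) ≤ (Real.exp 2 * t)⁻¹ - 1 := by
    have := Real.log_le_sub_one_of_pos (inv_pos.mpr hspos)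
    rwa [Real.log_inv] at this
  have h2 : (Real.exp 2 * t) * (1 - Real.log (Real.exp 2 * t)) ≤ 1 := by
    have h3 := mul_le_mul_of_nonneg_left h1 hspos.le
    rw [mul_sub, mul_inv_cancel₀ hspos.ne'] at h3
    nlinarith
  have he : Real.exp (-2) * Real.exp 2 = 1 := by rw [← Real.exp_add]; norm_num
  calc t * (-Real.log t - 1)
      = (Real.exp (-2) * Real.exp 2) * (t * (-Real.log t - 1)) := by rw [he, one_mul]
    _ = Real.exp (-2) * ((Real.exp 2 * t) * (1 - (2 + Real.log t))) := by ring
    _ = Real.exp (-2) * ((Real.exp 2 * t) * (1 - Real.log (Real.exp 2 * t))) := by rw [hlog]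
    _ ≤ Real.exp (-2) * 1 := mul_le_mul_of_nonneg_left h2 (Real.exp_pos _).le
    _ = Real.exp (-2) := mul_one _

lemma num_aux : Real.exp (-2) ≤ Real.log 2 ^ 2 := by
  have h1 := Real.exp_one_gt_d9
  have h2 := Real.log_two_gt_d9
  have h3 : Real.exp (-2) * (Real.exp 1 * Real.exp 1) = 1 := by
    rw [← Real.exp_add, ← Real.exp_add]; norm_num
  have h4 : (0:ℝ) < Real.exp (-2) := Real.exp_pos _
  have h5 : (2.7182818283:ℝ) * 2.7182818283 < Real.exp 1 * Real.exp 1 := by nlinarith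
  have h6 : Real.exp (-2) * ((2.7182818283:ℝ) * 2.7182818283) ≤ 1 := by nlinarith
  have h7 : Real.exp (-2) ≤ (0.136:ℝ) := by nlinarith
  have h8 : (0.6931471803:ℝ)^2 ≤ Real.log 2 ^ 2 := by nlinarith
  nlinarith

set_option maxHeartbeats 1000000 in
/-- Lower bound on the number of tests for noiseless group testing sparsity
approximation: if `Δ² < D ≤ n/2` and `M ∈ F₂^{m×n}` satisfies the `Δ`-approximation
condition for bound `D`, then
`m ≥ (D/Δ² − 1)·log₂(n/(D − Δ²)) − (D/Δ² − 1)·log₂ e`. -/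
theorem pool_lb {m n D : ℕ} (Δ : ℝ) (hΔ : 1 < Δ)
    (hΔD : Δ ^ 2 < (D : ℝ)) (hDn : (D : ℝ) ≤ (n : ℝ) / 2)
    (M : Matrix (Fin m) (Fin n) (ZMod 2)) (hM : ApproxCond M Δ D) :
    ((D : ℝ) / Δ ^ 2 - 1) * Real.logb 2 ((n : ℝ) / ((D : ℝ) - Δ ^ 2)) -
      ((D : ℝ) / Δ ^ 2 - 1) * Real.logb 2 (Real.exp 1) ≤ (m : ℝ) := by

  have hΔ0 : (0:ℝ) < Δ := lt_trans one_pos hΔ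
  have hΔ2 : (1:ℝ) < Δ ^ 2 := by nlinarith
  have hΔ2pos : (0:ℝ) < Δ ^ 2 := by positivity
  set t : ℝ := (D:ℝ) / Δ ^ 2 - 1 with htdef
  have htD : 1 < (D:ℝ) / Δ ^ 2 := (one_lt_div hΔ2pos).mpr hΔD
  have ht : 0 < t := by rw [htdef]; linarith
  set k : ℕ := ⌈t⌉₊ with hkdef
  have hk1 : 1 ≤ k := Nat.one_le_ceil_iff.mpr ht
  have hkt : t ≤ (k:ℝ) := Nat.le_ceil t
  have hkt1 : (k:ℝ) < t + 1 := Nat.ceil_lt_add_one ht.le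
  have ht1 : t + 1 = (D:ℝ) / Δ ^ 2 := by rw [htdef]; ring
  have hkD : Δ ^ 2 * (k:ℝ) < (D:ℝ) := by
    calc Δ ^ 2 * (k:ℝ) < Δ ^ 2 * (t + 1) := mul_lt_mul_of_pos_left hkt1 hΔ2pos
      _ = (D:ℝ) := by rw [ht1]; field_simp
  have hnD : (D:ℝ) ≤ (n:ℝ) := by
    have hn0 : (0:ℝ) ≤ (n:ℝ) := Nat.cast_nonneg n
    linarith
  have hDnat : D ≤ n := by exact_mod_cast hnD
  have hpow := pow_le_key hM hΔ hk1 hkD hDnat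
  have hkpos : (0:ℝ) < (k:ℝ) := by exact_mod_cast hk1
  have hΔkpos : (0:ℝ) < Δ ^ 2 * (k:ℝ) := by positivity
  have hnpos : (0:ℝ) < (n:ℝ) := by linarith
  have hreal : (n:ℝ) ^ k ≤ 2 ^ m * (Δ ^ 2 * (k:ℝ)) ^ k := by
    have h1 : ((n ^ k : ℕ) : ℝ) ≤ ((2 ^ m * (⌊Δ ^ 2 * (k:ℝ)⌋₊) ^ k : ℕ) : ℝ) := by
      exact_mod_cast hpow
    push_cast at h1
    calc (n:ℝ) ^ k ≤ 2 ^ m * ((⌊Δ ^ 2 * (k:ℝ)⌋₊ : ℝ)) ^ k := h1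
      _ ≤ 2 ^ m * (Δ ^ 2 * (k:ℝ)) ^ k := by
          apply mul_le_mul_of_nonneg_left _ (by positivity)
          exact pow_le_pow_left₀ (by positivity) (Nat.floor_le (by positivity)) k
  have hlog : (k:ℝ) * Real.log n ≤ (m:ℝ) * Real.log 2 +
      (k:ℝ) * (Real.log (Δ ^ 2) + Real.log k) := by
    have h2 := Real.log_le_log (by positivity) hreal
    rw [Real.log_pow, Real.log_mul (by positivity) (by positivity), Real.log_pow,
      Real.log_pow, Real.log_mul hΔ2pos.ne' hkpos.ne'] at h2
    push_cast at h2 ⊢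
    linarith
  set A : ℝ := Real.log n - Real.log (Δ ^ 2) with hA
  have hmain : (k:ℝ) * (A - Real.log k) ≤ (m:ℝ) * Real.log 2 := by
    rw [hA]; nlinarith [hlog]
  have hA2 : Real.log 2 ≤ A - Real.log k := by
    have h1 : Δ ^ 2 * (k:ℝ) ≤ (n:ℝ) / 2 := le_trans hkD.le hDn
    have h2 : Real.log (Δ ^ 2 * (k:ℝ)) ≤ Real.log ((n:ℝ) / 2) := Real.log_le_log hΔkpos h1
    rw [Real.log_mul hΔ2pos.ne' hkpos.ne', Real.log_div hnpos.ne' two_ne_zero] at h2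
    rw [hA]; linarith
  have hlog2pos : (0:ℝ) < Real.log 2 := Real.log_pos one_lt_two
  have hlog2lt1 : Real.log 2 < 1 := by
    have := Real.log_two_lt_d9
    linarith
  -- the key inequality
  have key : t * (A - Real.log t - 1) ≤ (m:ℝ) * Real.log 2 := by
    have hsuff : t * (A - Real.log t - 1) ≤ (k:ℝ) * (A - Real.log k) := by
      by_cases hcase : 1 - Real.log 2 ≤ t
      · -- general case
        have hδ0 : (0:ℝ) ≤ (k:ℝ) - t := by linarith
        have hδ1 : (k:ℝ) - t ≤ 1 := by linarith
        have hlogKt : Real.log k - Real.log t ≤ ((k:ℝ) - t) / t := by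
          have h := Real.log_le_sub_one_of_pos (show (0:ℝ) < (k:ℝ)/t by positivity)
          rw [Real.log_div hkpos.ne' ht.ne'] at h
          have : (k:ℝ)/t - 1 = ((k:ℝ) - t)/t := by field_simp
          linarith [this ▸ h]
        have hKlogK : t * (Real.log k - Real.log t) ≤ (k:ℝ) - t := by
          calc t * (Real.log k - Real.log t) ≤ t * (((k:ℝ) - t)/t) :=
                mul_le_mul_of_nonneg_left hlogKt ht.le
            _ = (k:ℝ) - t := by field_simp
        have e4 : ((k:ℝ) - t) * Real.log 2 ≤ ((k:ℝ) - t) * (A - Real.log k) :=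
          mul_le_mul_of_nonneg_left hA2 hδ0
        have e6 : ((k:ℝ) - t) * (1 - Real.log 2) ≤ 1 * (1 - Real.log 2) :=
          mul_le_mul_of_nonneg_right hδ1 (by linarith)
        nlinarith [hKlogK, e4, e6]
      · -- small case : t < 1 - log 2, so k = 1
        push_neg at hcase
        have ht1' : t ≤ 1 := by linarith
        have hkeq : k = 1 := by
          have h1 : ⌈t⌉₊ ≤ 1 := Nat.ceil_le.mpr (by exact_mod_cast ht1')
          omega
        rw [hkeq]
        push_cast
        rw [Real.log_one]
        have hA1 : Real.log 2 ≤ A := by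
          have : Real.log (1:ℕ) = 0 := by norm_num
          rw [hkeq] at hA2
          push_cast at hA2
          rw [Real.log_one] at hA2
          linarith
        have hsm := small_aux ht
        have hnum := num_aux
        have h1 : Real.log 2 ^ 2 ≤ (1 - t) * Real.log 2 := by nlinarith
        have h2 : (1 - t) * Real.log 2 ≤ (1 - t) * A :=
          mul_le_mul_of_nonneg_left hA1 (by linarith)
        have hexp : t * (A - Real.log t - 1) = t * A + t * (-Real.log t - 1) := by ring
        rw [hexp]
        nlinarith [hsm, hnum, h1, h2]
    linarith [hmain]
  -- convert goal
  have hDsub : (D:ℝ) - Δ ^ 2 = Δ ^ 2 * t := by rw [htdef]; field_simp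
  have hlogn : Real.log ((n:ℝ) / ((D:ℝ) - Δ ^ 2)) = A - Real.log t := by
    rw [hDsub, Real.log_div hnpos.ne' (by positivity), Real.log_mul hΔ2pos.ne' ht.ne', hA]
    ring
  rw [Real.logb, Real.logb, Real.log_exp, hlogn]
  rw [show t * ((A - Real.log t) / Real.log 2) - t * (1 / Real.log 2)
      = (t * (A - Real.log t - 1)) / Real.log 2 by field_simp]
  rw [div_le_iff₀ hlog2pos]
  exact key
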